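/- arXiv:1612.04141 — 2 statements merged into one kernel-verified Lean document; each statement's English description precedes it below -/
import Mathlib

section
/- If f : X → ℝ ∪ {+∞} is a proper convex function on a finite-dimensional real Hilbert space X that is strongly convex with parameter α > 0, then its convex conjugate f* is differentiable everywhere and its gradient ∇f* is Lipschitz continuous with constant 1/α. -/
open RealInnerProductSpace

/-- `p` is a subgradient of `f` at `x`. -/
def SubgradientAt {X : Type*} [NormedAddCommGroup X] [InnerProductSpace ℝ X]
    (f : X → ℝ) (p x : X) : Prop :=
  ∀ z, f z ≥ f x + ⟪p, z - x⟫

/-- `f` is strongly convex with parameter `α` (via the subgradient inequality). -/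
def StronglyConvex {X : Type*} [NormedAddCommGroup X] [InnerProductSpace ℝ X]
    (f : X → ℝ) (α : ℝ) : Prop :=
  ∀ x₁ x₂ p, SubgradientAt f p x₁ →
    f x₂ ≥ f x₁ + ⟪p, x₂ - x₁⟫ + α / 2 * ‖x₂ - x₁‖ ^ 2

/-- The convex conjugate of `f`. -/
noncomputable def conj {X : Type*} [NormedAddCommGroup X] [InnerProductSpace ℝ X]
    (f : X → ℝ) (y : X) : ℝ :=
  ⨆ x, (⟪x, y⟫ - f x)

/-!
A strongly convex `f` grows quadratically away from any point where it has a subgradient (one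
exists by Hahn–Banach), so for every `y` the function `⟪·, y⟫ - f` attains its maximum at some
`x y`; equivalently `y` is a subgradient of `f` at `x y`, and then `x y` is a subgradient of `f*`
at `y`. Strong convexity makes the subdifferential strongly monotone,
`α ‖x₁ - x₂‖² ≤ ⟪y₁ - y₂, x₁ - x₂⟫`, so `x` is `1/α`-Lipschitz. Finally, a function with a
continuous selection of subgradients is differentiable, with that selection as its gradient.
-/

open Filter Set

theorem ConvexOn.exists_strongDual_forall_add_le {E : Type*} [NormedAddCommGroup E]
    [NormedSpace ℝ E] {f : E → ℝ} (hf : ConvexOn ℝ univ f) (hcont : Continuous f) (x : E) :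
    ∃ L : StrongDual ℝ E, ∀ z, f x + L (z - x) ≤ f z := by
  have hconvex : Convex ℝ {q : E × ℝ | f q.1 < q.2} := by
    simpa using hf.convex_strict_epigraph
  have hopen : IsOpen {q : E × ℝ | f q.1 < q.2} :=
    isOpen_lt (hcont.comp continuous_fst) continuous_snd
  -- Separate `(x, f x)` from the open strict epigraph; the functional must decrease in the
  -- vertical direction, and rescaling its horizontal part gives the supporting functional.
  obtain ⟨φ, hφ⟩ :=
    geometric_hahn_banach_open_point hconvex hopen (x := (x, f x)) (lt_irrefl (f x))
  set c := φ (0, 1)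
  have hsplit : ∀ z t, φ (z, t) = φ (z, 0) + t * c := fun z t => by
    rw [show (z, t) = (z, 0) + t • ((0 : E), (1 : ℝ)) by simp, map_add, map_smul, smul_eq_mul]
  have hsep : ∀ z t, f z < t → φ (z, 0) - φ (x, 0) < (t - f x) * -c := fun z t ht => by
    have := hφ (z, t) ht
    rw [hsplit z t, hsplit x (f x)] at this
    linarith
  have hc : 0 < -c := by
    simpa using hsep x (f x + 1) (by linarith)
  refine ⟨(-c)⁻¹ • φ.comp (ContinuousLinearMap.inl ℝ E ℝ), fun z => ?_⟩
  refine le_of_forall_gt_imp_ge_of_dense fun t ht => ?_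
  have hL : (-c)⁻¹ * (φ (z, 0) - φ (x, 0)) < t - f x := by
    rw [inv_mul_lt_iff₀ hc, mul_comm]
    exact hsep z t ht
  have hLz : ((-c)⁻¹ • φ.comp (ContinuousLinearMap.inl ℝ E ℝ)) (z - x) =
      (-c)⁻¹ * (φ (z, 0) - φ (x, 0)) := by
    simp [← map_sub]
  linarith

section Subgradient

variable {X : Type*} [NormedAddCommGroup X] [InnerProductSpace ℝ X]

theorem ConvexOn.exists_subgradientAt [CompleteSpace X] {f : X → ℝ} (hf : ConvexOn ℝ univ f)
    (hcont : Continuous f) (x : X) : ∃ p, SubgradientAt f p x := by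
  obtain ⟨L, hL⟩ := hf.exists_strongDual_forall_add_le hcont x
  refine ⟨(InnerProductSpace.toDual ℝ X).symm L, fun z => ?_⟩
  rw [InnerProductSpace.toDual_symm_apply]
  exact hL z

theorem subgradientAt_iff_forall_inner_sub_le {f : X → ℝ} {x y : X} :
    SubgradientAt f y x ↔ ∀ z, ⟪z, y⟫ - f z ≤ ⟪x, y⟫ - f x := by
  refine forall_congr' fun z => ?_
  rw [inner_sub_right, real_inner_comm y z, real_inner_comm y x]
  constructor <;> intro h <;> linarith

theorem SubgradientAt.abs_sub_sub_inner_le {g : X → ℝ} {p q y y' : X}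
    (hp : SubgradientAt g p y) (hq : SubgradientAt g q y') :
    |g y' - g y - ⟪p, y' - y⟫| ≤ ‖q - p‖ * ‖y' - y‖ := by
  have hlower := hp y'
  have hupper := hq y
  have hcs := real_inner_le_norm (q - p) (y' - y)
  rw [inner_sub_left] at hcs
  rw [← neg_sub y' y, inner_neg_right] at hupper
  rw [abs_of_nonneg (by linarith)]
  linarith

theorem hasGradientAt_of_subgradientAt [CompleteSpace X] {g : X → ℝ} {x : X → X} {y : X}
    (hsub : ∀ y', SubgradientAt g (x y') y') (hx : ContinuousAt x y) :
    HasGradientAt g (x y) y := by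
  rw [hasGradientAt_iff_isLittleO]
  refine Asymptotics.isLittleO_iff.2 fun ε hε => ?_
  filter_upwards [hx (Metric.closedBall_mem_nhds (x y) hε)] with y' hy'
  rw [Set.mem_preimage, Metric.mem_closedBall, dist_eq_norm] at hy'
  calc ‖g y' - g y - ⟪x y, y' - y⟫‖ ≤ ‖x y' - x y‖ * ‖y' - y‖ :=
        (hsub y).abs_sub_sub_inner_le (hsub y')
    _ ≤ ε * ‖y' - y‖ := by gcongr

theorem SubgradientAt.conj_eq {f : X → ℝ} {x y : X} (h : SubgradientAt f y x) :
    conj f y = ⟪x, y⟫ - f x := by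
  have hmax := subgradientAt_iff_forall_inner_sub_le.1 h
  exact le_antisymm (ciSup_le hmax) (le_ciSup ⟨_, forall_mem_range.2 hmax⟩ x)

theorem subgradientAt_conj {f : X → ℝ} {x : X → X} (hx : ∀ y, SubgradientAt f y (x y)) (y : X) :
    SubgradientAt (conj f) (x y) y := by
  intro y'
  have hmax := subgradientAt_iff_forall_inner_sub_le.1 (hx y') (x y)
  rw [(hx y).conj_eq, (hx y').conj_eq, inner_sub_right]
  linarith

namespace StronglyConvex

variable {f : X → ℝ} {α : ℝ}

theorem mul_norm_sub_sq_le_inner (hsc : StronglyConvex f α) {p₁ p₂ x₁ x₂ : X}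
    (h₁ : SubgradientAt f p₁ x₁) (h₂ : SubgradientAt f p₂ x₂) :
    α * ‖x₁ - x₂‖ ^ 2 ≤ ⟪p₁ - p₂, x₁ - x₂⟫ := by
  have e₁ := hsc x₁ x₂ p₁ h₁
  have e₂ := hsc x₂ x₁ p₂ h₂
  rw [norm_sub_rev, ← neg_sub x₁ x₂, inner_neg_right] at e₁
  rw [inner_sub_left]
  linarith

theorem lipschitzWith_of_forall_subgradientAt (hsc : StronglyConvex f α) (hα : 0 < α)
    {x : X → X} (hx : ∀ y, SubgradientAt f y (x y)) :
    LipschitzWith (Real.toNNReal (1 / α)) x := by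
  refine LipschitzWith.of_dist_le_mul fun y₁ y₂ => ?_
  rw [dist_eq_norm, dist_eq_norm, Real.coe_toNNReal _ (by positivity), one_div_mul_eq_div,
    le_div_iff₀' hα]
  have hmono := hsc.mul_norm_sub_sq_le_inner (hx y₁) (hx y₂)
  have hcs := real_inner_le_norm (y₁ - y₂) (x y₁ - x y₂)
  rcases (norm_nonneg (x y₁ - x y₂)).eq_or_lt with h | h
  · rw [← h, mul_zero]
    exact norm_nonneg _
  · refine le_of_mul_le_mul_right ?_ h
    nlinarith

theorem exists_subgradientAt [ProperSpace X] (hsc : StronglyConvex f α) (hα : 0 < α)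
    (hcont : Continuous f) {p₀ x₀ : X} (h₀ : SubgradientAt f p₀ x₀) (y : X) :
    ∃ x, SubgradientAt f y x := by
  -- The quadratic minorant at `x₀` makes `⟪·, y⟫ - f` tend to `-∞` at infinity.
  have hbound : ∀ z, ⟪z, y⟫ - f z ≤
      (⟪x₀, y⟫ - f x₀) + dist z x₀ * (‖y - p₀‖ + -(α / 2) * dist z x₀) := by
    intro z
    have hq := hsc x₀ z p₀ h₀
    have hcs := real_inner_le_norm (z - x₀) (y - p₀)
    have hsplit : ⟪z, y⟫ = ⟪z - x₀, y - p₀⟫ + ⟪p₀, z - x₀⟫ + ⟪x₀, y⟫ := by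
      simp only [inner_sub_left, inner_sub_right, real_inner_comm p₀]
      ring
    rw [dist_eq_norm]
    nlinarith
  have hdist := tendsto_dist_right_cocompact_atTop x₀
  have hcoercive : Tendsto (fun z => ⟪z, y⟫ - f z) (cocompact X) atBot :=
    tendsto_atBot_mono hbound <| tendsto_atBot_add_const_left _ _ <| hdist.atTop_mul_atBot₀ <|
      tendsto_atBot_add_const_left _ _ <| hdist.const_mul_atTop_of_neg (by linarith)
  obtain ⟨x, hx⟩ := ((continuous_id.inner continuous_const).sub hcont).exists_forall_ge hcoercive
  exact ⟨x, subgradientAt_iff_forall_inner_sub_le.2 hx⟩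

end StronglyConvex

end Subgradient

theorem stmt0 {X : Type*} [NormedAddCommGroup X] [InnerProductSpace ℝ X]
    [FiniteDimensional ℝ X] (f : X → ℝ) (α : ℝ) (hα : 0 < α)
    (hconv : ConvexOn ℝ Set.univ f) (hsc : StronglyConvex f α) :
    ∃ f' : X → X, (∀ y, HasGradientAt (conj f) (f' y) y) ∧
      LipschitzWith (Real.toNNReal (1 / α)) f' := by
  have hcont : Continuous f := continuousOn_univ.mp (hconv.continuousOn isOpen_univ)
  obtain ⟨p₀, hp₀⟩ := hconv.exists_subgradientAt hcont 0
  choose x hx using hsc.exists_subgradientAt hα hcont hp₀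
  have hlip := hsc.lipschitzWith_of_forall_subgradientAt hα hx
  exact ⟨x, fun y => hasGradientAt_of_subgradientAt (subgradientAt_conj hx)
    hlip.continuous.continuousAt, hlip⟩
end

section
/- For all κ > 0: 1/(√(1/(2κ)) + 1) > (√(1+4κ) - 1)/(√(1+4κ) + 1), i.e. the optimal rate of the unaccelerated ADMM (with θ = 1) is strictly worse (larger) than the optimal rate of the accelerated ADMM. -/
theorem stmt13 (κ : ℝ) (hκ : 0 < κ) :
    1 / (Real.sqrt (1 / (2 * κ)) + 1) >
      (Real.sqrt (1 + 4 * κ) - 1) / (Real.sqrt (1 + 4 * κ) + 1) := by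
  set a := Real.sqrt (1 / (2 * κ)) with ha
  set b := Real.sqrt (1 + 4 * κ) with hb
  have ha2 : a ^ 2 = 1 / (2 * κ) := Real.sq_sqrt (by positivity)
  have hb2 : b ^ 2 = 1 + 4 * κ := Real.sq_sqrt (by positivity)
  have hap : 0 < a := Real.sqrt_pos.2 (by positivity)
  have hbp : 0 < b := Real.sqrt_pos.2 (by positivity)
  have key : a ^ 2 * b ^ 2 = a ^ 2 + 2 := by
    rw [ha2, hb2]; field_simp; ring
  have hab : a * b < a + 2 := by nlinarith [mul_pos hap hbp]
  rw [gt_iff_lt, div_lt_div_iff₀ (by linarith) (by linarith)]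
  nlinarith
end
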